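/- Let a ≤ c ≤ b be real numbers and let P, q : ℝ → ℝ be continuous on [a,b]. Suppose y₋, y₊, z₋, z₊ : ℝ → ℝ are twice continuously differentiable on [a,b] and satisfy on [a,b]: y₋″ = P·y₋, y₊″ = P·y₊, z₋″ = P·z₋ + q·y₋, z₊″ = P·z₊ + q·y₊, together with the boundary conditions z₋(a) = z₋′(a) = 0 and z₊(b) = z₊′(b) = 0. Then y₊(c)·z₋′(c) + z₊(c)·y₋′(c) − z₋(c)·y₊′(c) − y₋(c)·z₊′(c) = ∫_a^b q(x)·y₋(x)·y₊(x) dx. -/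

import Mathlib

open Set

/-! Both Wronskians `y₊ z₋′ − z₋ y₊′` and `y₋ z₊′ − z₊ y₋′` have derivative `q y₋ y₊`, the
first vanishing at `a` and the second at `b`; integrating them over `[a, c]` and `[c, b]`
respectively gives the two halves of the integral. -/

/-- Subtracting `z` times the homogeneous equation from `y` times the inhomogeneous one
cancels the potential. -/
theorem hasDerivWithinAt_wronskian {𝕜 : Type*} [NontriviallyNormedField 𝕜]
    {y dy z dz : 𝕜 → 𝕜} {p r x : 𝕜} {s : Set 𝕜}
    (hy : HasDerivWithinAt y (dy x) s x) (hdy : HasDerivWithinAt dy (p * y x) s x)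
    (hz : HasDerivWithinAt z (dz x) s x) (hdz : HasDerivWithinAt dz (p * z x + r) s x) :
    HasDerivWithinAt (fun t => y t * dz t - z t * dy t) (y x * r) s x :=
  ((hy.mul hdz).sub (hz.mul hdy)).congr_deriv (by ring)

theorem integral_eq_sub_of_hasDerivWithinAt_of_Icc_subset {E : Type*} [NormedAddCommGroup E]
    [NormedSpace ℝ E] [CompleteSpace E] {f f' : ℝ → E} {a b : ℝ} {s : Set ℝ}
    (hab : a ≤ b) (hs : Icc a b ⊆ s) (hf : ∀ x ∈ Icc a b, HasDerivWithinAt f (f' x) s x)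
    (hint : IntervalIntegrable f' MeasureTheory.volume a b) :
    ∫ x in a..b, f' x = f b - f a :=
  intervalIntegral.integral_eq_sub_of_hasDerivAt_of_le hab
    (fun x hx => ((hf x hx).continuousWithinAt).mono hs)
    (fun x hx => (hf x (Ioo_subset_Icc_self hx)).hasDerivAt
      (Filter.mem_of_superset (Icc_mem_nhds hx.1 hx.2) hs))
    hint

theorem stmt3 (a b c : ℝ) (hac : a ≤ c) (hcb : c ≤ b)
    (P q : ℝ → ℝ) (hq : ContinuousOn q (Icc a b))
    (ym yp zm zp dym dyp dzm dzp : ℝ → ℝ)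
    (hym : ∀ x ∈ Icc a b, HasDerivWithinAt ym (dym x) (Icc a b) x)
    (hym' : ∀ x ∈ Icc a b, HasDerivWithinAt dym (P x * ym x) (Icc a b) x)
    (hyp : ∀ x ∈ Icc a b, HasDerivWithinAt yp (dyp x) (Icc a b) x)
    (hyp' : ∀ x ∈ Icc a b, HasDerivWithinAt dyp (P x * yp x) (Icc a b) x)
    (hzm : ∀ x ∈ Icc a b, HasDerivWithinAt zm (dzm x) (Icc a b) x)
    (hzm' : ∀ x ∈ Icc a b, HasDerivWithinAt dzm (P x * zm x + q x * ym x) (Icc a b) x)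
    (hzp : ∀ x ∈ Icc a b, HasDerivWithinAt zp (dzp x) (Icc a b) x)
    (hzp' : ∀ x ∈ Icc a b, HasDerivWithinAt dzp (P x * zp x + q x * yp x) (Icc a b) x)
    (hzma : zm a = 0) (hdzma : dzm a = 0) (hzpb : zp b = 0) (hdzpb : dzp b = 0) :
    yp c * dzm c + zp c * dym c - zm c * dyp c - ym c * dzp c =
      ∫ x in a..b, q x * ym x * yp x := by
  have hleft : Icc a c ⊆ Icc a b := Icc_subset_Icc_right hcb
  have hright : Icc c b ⊆ Icc a b := Icc_subset_Icc_left hac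
  have hg : ContinuousOn (fun x => q x * ym x * yp x) (Icc a b) :=
    (hq.mul fun x hx => (hym x hx).continuousWithinAt).mul
      fun x hx => (hyp x hx).continuousWithinAt
  have hWm : ∀ x ∈ Icc a b, HasDerivWithinAt (fun t => yp t * dzm t - zm t * dyp t)
      (q x * ym x * yp x) (Icc a b) x := fun x hx =>
    (hasDerivWithinAt_wronskian (hyp x hx) (hyp' x hx) (hzm x hx) (hzm' x hx)).congr_deriv
      (by ring)
  have hWp : ∀ x ∈ Icc a b, HasDerivWithinAt (fun t => ym t * dzp t - zp t * dym t)
      (q x * ym x * yp x) (Icc a b) x := fun x hx =>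
    (hasDerivWithinAt_wronskian (hym x hx) (hym' x hx) (hzp x hx) (hzp' x hx)).congr_deriv
      (by ring)
  have hint_left := (hg.mono hleft).intervalIntegrable_of_Icc (μ := MeasureTheory.volume) hac
  have hint_right := (hg.mono hright).intervalIntegrable_of_Icc (μ := MeasureTheory.volume) hcb
  rw [← intervalIntegral.integral_add_adjacent_intervals hint_left hint_right,
    integral_eq_sub_of_hasDerivWithinAt_of_Icc_subset hac hleft (fun x hx => hWm x (hleft hx))
      hint_left,
    integral_eq_sub_of_hasDerivWithinAt_of_Icc_subset hcb hright (fun x hx => hWp x (hright hx))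
      hint_right,
    hzma, hdzma, hzpb, hdzpb]
  ring
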